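/- Define α := (C_R(1+μ) + γ₁β₁ + γ₂β₂ + γ₃) / (C_R(1+μ−ε) + γ₁ + γ₂ + γ₃(1−δ₃)) with all parameters positive, β₁, β₂ ∈ (0,1), δ₃ = ρε², γ₃ = C_Q/(ρε), γ₁ = γ₂β₂/(1−β₁). Then α > 0 always, and α < 1 if and only if εC_R + δ₃C_Q/(ρε) < γ₁(1−β₁) + γ₂(1−β₂); moreover with γ₂ = δ₂/C₂ this inequality holds whenever 0 < ε < min{δ₂/(C₂(C_R + C_Q)), 1}. -/
import Mathlib


/-- The arithmetic at the heart of Theorem 6.3 (contraction of the AFEM):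
    α > 0 always; α < 1 iff εC_R + δ₃C_Q/(ρε) < γ₁(1−β₁) + γ₂(1−β₂); and with
    γ₂ = δ₂/C₂ this inequality holds whenever 0 < ε < min{δ₂/(C₂(C_R + C_Q)), 1}. -/
theorem contraction_factor_arith
    (CR CQ C₂ μ ε δ₂ δ₃ ρ γ₁ γ₂ γ₃ β₁ β₂ α : ℝ)
    (hCR : 0 < CR) (hCQ : 0 < CQ) (hC₂ : 0 < C₂) (hμ : 0 < μ) (hδ₂ : 0 < δ₂)
    (hρ : ρ ∈ Set.Ioo (0 : ℝ) 1) (hε : ε ∈ Set.Ioo (0 : ℝ) 1)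
    (hβ₁ : β₁ ∈ Set.Ioo (0 : ℝ) 1) (hβ₂ : β₂ ∈ Set.Ioo (0 : ℝ) 1)
    (hγ₂ : 0 < γ₂)
    (hδ₃ : δ₃ = ρ * ε ^ 2)
    (hγ₃ : γ₃ = CQ / (ρ * ε))
    (hγ₁ : γ₁ = γ₂ * β₂ / (1 - β₁))
    (hα : α = (CR * (1 + μ) + γ₁ * β₁ + γ₂ * β₂ + γ₃) /
              (CR * (1 + μ - ε) + γ₁ + γ₂ + γ₃ * (1 - δ₃))) :
    0 < α
    ∧ (α < 1 ↔ ε * CR + δ₃ * CQ / (ρ * ε) < γ₁ * (1 - β₁) + γ₂ * (1 - β₂))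
    ∧ (γ₂ = δ₂ / C₂ → ε < min (δ₂ / (C₂ * (CR + CQ))) 1 →
        ε * CR + δ₃ * CQ / (ρ * ε) < γ₁ * (1 - β₁) + γ₂ * (1 - β₂)) := by
  obtain ⟨hρ0, hρ1⟩ := hρ
  obtain ⟨hε0, hε1⟩ := hε
  obtain ⟨hβ₁0, hβ₁1⟩ := hβ₁
  obtain ⟨hβ₂0, hβ₂1⟩ := hβ₂
  have hρε : 0 < ρ * ε := by positivity
  have hγ₃0 : 0 < γ₃ := by rw [hγ₃]; positivity
  have hβ₁' : 0 < 1 - β₁ := by linarith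
  have hγ₁0 : 0 < γ₁ := by rw [hγ₁]; positivity
  have hδ₃0 : 0 < δ₃ := by rw [hδ₃]; positivity
  have hδ₃1 : δ₃ < 1 := by
    rw [hδ₃]
    nlinarith
  have hδ' : δ₃ * CQ / (ρ * ε) = ε * CQ := by
    rw [hδ₃]; field_simp
  have hγδ : γ₃ * δ₃ = ε * CQ := by
    rw [hγ₃, hδ₃]; field_simp
  have hnum : 0 < CR * (1 + μ) + γ₁ * β₁ + γ₂ * β₂ + γ₃ := by positivity
  have hden : 0 < CR * (1 + μ - ε) + γ₁ + γ₂ + γ₃ * (1 - δ₃) := by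
    have h1 : 0 < 1 + μ - ε := by linarith
    have h2 : 0 < 1 - δ₃ := by linarith
    positivity
  have hγ₁b : γ₁ * (1 - β₁) = γ₂ * β₂ := by
    rw [hγ₁]; field_simp
  refine ⟨by rw [hα]; positivity, ?_, ?_⟩
  · rw [hα, div_lt_one hden, hδ']
    constructor
    · intro h; nlinarith
    · intro h; nlinarith
  · intro h2 hlt
    rw [hδ', hγ₁b, h2]
    have hlt1 := lt_of_lt_of_le hlt (min_le_left _ _)
    have hpos : 0 < C₂ * (CR + CQ) := by positivity
    rw [lt_div_iff₀ hpos] at hlt1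
    have : ε * CR + ε * CQ < δ₂ / C₂ := by
      rw [lt_div_iff₀ hC₂]; nlinarith
    linarith [this]
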